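/- arXiv:1909.13137 — 4 statements merged into one kernel-verified Lean document; each statement's English description precedes it below -/
import Mathlib

section
/- Let λ, a ∈ ℂ with λ ≠ 0. The function G(z) = λ sin(z) − z + a has infinitely many zeros in ℂ; equivalently, f(z) = λ sin(z) + a has infinitely many fixed points. -/
/-!
Substituting `u = z * I`, the fixed points `z` of `λ sin z + a` correspond to the solutions of
`exp u = 2 (u - a I) / λ + exp (-u)`. Far to the right, `exp (-u)` is negligible, so near
`ζₖ = 2πik + log wₖ`, where `wₖ = 2 (2πik - a I) / λ`, the right-hand side is close to
`exp ζₖ = wₖ` and varies slowly compared with `‖wₖ‖`. Hence `u ↦ ζₖ + log (F u / wₖ)`, with `F`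
the right-hand side, is a contraction of the closed unit ball around `ζₖ`, and its fixed point is
a solution with `re u ≥ log ‖wₖ‖ - 1`, which tends to infinity with `k`.
-/

open Complex Metric Filter Set Function
open scoped Real

theorem LipschitzOnWith.exists_isFixedPt_of_mapsTo {α : Type*} [MetricSpace α] {K : NNReal}
    {f : α → α} {s : Set α} (hf : LipschitzOnWith K f s) (hK : K < 1) (hs : IsComplete s)
    (hmaps : MapsTo f s s) (hne : s.Nonempty) : ∃ x ∈ s, IsFixedPt f x := by
  obtain ⟨x, hx⟩ := hne
  obtain ⟨y, hy, hfix, -⟩ := ContractingWith.exists_fixedPoint' hs hmaps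
    ⟨hK, hf.mapsToRestrict hmaps⟩ hx (edist_ne_top _ _)
  exact ⟨y, hy, hfix⟩

theorem Real.eventually_mul_log_add_le_self (A B : ℝ) :
    ∀ᶠ x in atTop, A * Real.log x + B ≤ x := by
  have hlittle := (Real.isLittleO_log_id_atTop.const_mul_left A).add
    (Asymptotics.isLittleO_const_id_atTop B)
  filter_upwards [hlittle.bound one_pos, eventually_ge_atTop 0] with x hx hx0
  rw [id, one_mul, Real.norm_of_nonneg hx0] at hx
  exact (le_abs_self _).trans (by simpa using hx)

namespace Complex

theorem tendsto_norm_natCast_mul_sub_atTop {α : ℂ} (hα : α ≠ 0) (β : ℂ) :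
    Tendsto (fun k : ℕ => ‖k * α - β‖) atTop atTop := by
  refine tendsto_atTop_mono (fun k => ?_) (tendsto_atTop_add_const_right _ (-‖β‖)
    (tendsto_natCast_atTop_atTop.atTop_mul_const (norm_pos_iff.2 hα)))
  calc (k : ℝ) * ‖α‖ + -‖β‖ = ‖(k : ℂ) * α‖ - ‖β‖ := by
        rw [norm_mul, norm_natCast, ← sub_eq_add_neg]
    _ ≤ ‖k * α - β‖ := norm_sub_norm_le _ _

theorem lipschitzOnWith_log_closedBall_one {r : NNReal} (hr : r < 1) :
    LipschitzOnWith (1 - r)⁻¹ log (closedBall 1 r) := by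
  refine (convex_closedBall _ _).lipschitzOnWith_of_nnnorm_hasDerivWithin_le
    (fun x hx => (hasDerivAt_log ?_).hasDerivWithinAt) fun x hx => ?_ <;>
    rw [mem_closedBall, dist_eq_norm] at hx
  · simpa using mem_slitPlane_of_norm_lt_one (hx.trans_lt hr)
  · have hx : 1 - r ≤ ‖x‖₊ := by
      rw [tsub_le_iff_right, ← NNReal.coe_le_coe]
      push_cast
      linarith [norm_sub_norm_le (1 : ℂ) x, norm_sub_rev x 1, norm_one (α := ℂ)]
    rw [nnnorm_inv]
    exact inv_anti₀ (tsub_pos_of_lt hr) hx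

theorem norm_exp_sub_exp_le_of_re_le {r : ℝ} {u v : ℂ} (hu : u.re ≤ r) (hv : v.re ≤ r) :
    ‖exp u - exp v‖ ≤ Real.exp r * ‖u - v‖ :=
  (convex_halfSpace_re_le r).norm_image_sub_le_of_norm_hasDerivWithin_le
    (fun z _ => (hasDerivAt_exp z).hasDerivWithinAt)
    (fun z hz => by rw [norm_exp]; exact Real.exp_le_exp.2 hz) hv hu

theorem norm_log_le_log_norm_add_pi {w : ℂ} (hw : 1 ≤ ‖w‖) : ‖log w‖ ≤ Real.log ‖w‖ + π := by
  refine (norm_le_abs_re_add_abs_im _).trans ?_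
  rw [log_re, log_im, abs_of_nonneg (Real.log_nonneg hw)]
  exact add_le_add_right (abs_arg_le_pi w) _

theorem exists_exp_eq_of_approx {h : ℂ → ℂ} {ζ : ℂ}
    (happrox : ∀ u ∈ closedBall ζ 1, ‖h u - exp ζ‖ ≤ ‖exp ζ‖ / 2)
    (hlip : ∀ u ∈ closedBall ζ 1, ∀ v ∈ closedBall ζ 1, ‖h u - h v‖ ≤ ‖exp ζ‖ / 4 * ‖u - v‖) :
    ∃ u ∈ closedBall ζ 1, exp u = h u := by
  have hexp : 0 < ‖exp ζ‖ := norm_pos_iff.2 (exp_ne_zero ζ)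
  have hball : MapsTo (fun u => h u / exp ζ) (closedBall ζ 1) (closedBall 1 (1 / 2 : NNReal)) := by
    intro u hu
    rw [mem_closedBall, dist_eq_norm, div_sub_one (exp_ne_zero ζ), norm_div, div_le_iff₀ hexp]
    push_cast
    linarith [happrox u hu]
  have hlog : LipschitzOnWith 2 log (closedBall 1 (1 / 2 : NNReal)) := by
    convert lipschitzOnWith_log_closedBall_one (r := 1 / 2) (by norm_num)
    rw [← NNReal.coe_inj]
    push_cast [NNReal.coe_sub (by norm_num : (1 / 2 : NNReal) ≤ 1)]
    norm_num
  -- Dividing by `exp ζ` keeps the argument of `log` near `1`, away from the branch cut.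
  set S : ℂ → ℂ := fun u => ζ + log (h u / exp ζ)
  have hmaps : MapsTo S (closedBall ζ 1) (closedBall ζ 1) := by
    intro u hu
    have hu' := hball hu
    rw [mem_closedBall, dist_eq_norm] at hu'
    rw [mem_closedBall, dist_eq_norm, add_sub_cancel_left]
    calc ‖log (h u / exp ζ)‖ = ‖log (1 + (h u / exp ζ - 1))‖ := by rw [add_sub_cancel]
      _ ≤ 3 / 2 * ‖h u / exp ζ - 1‖ := norm_log_one_add_half_le_self (by exact_mod_cast hu')
      _ ≤ 1 := by push_cast at hu'; linarith
  have hS : LipschitzOnWith (1 / 2) S (closedBall ζ 1) := by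
    refine LipschitzOnWith.of_dist_le_mul fun u hu v hv => ?_
    rw [dist_eq_norm, dist_eq_norm, add_sub_add_left_eq_sub]
    calc ‖log (h u / exp ζ) - log (h v / exp ζ)‖ ≤ 2 * ‖h u / exp ζ - h v / exp ζ‖ := by
          simpa [dist_eq_norm] using hlog.dist_le_mul _ (hball hu) _ (hball hv)
      _ = 2 * ‖h u - h v‖ / ‖exp ζ‖ := by rw [div_sub_div_same, norm_div, mul_div_assoc]
      _ ≤ 2 * (‖exp ζ‖ / 4 * ‖u - v‖) / ‖exp ζ‖ := by gcongr; exact hlip u hu v hv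
      _ = (1 / 2 : NNReal) * ‖u - v‖ := by push_cast; field_simp; ring
  obtain ⟨u, hu, hfix⟩ := hS.exists_isFixedPt_of_mapsTo (by norm_num)
    isClosed_closedBall.isComplete hmaps ⟨ζ, mem_closedBall_self zero_le_one⟩
  have hne : h u / exp ζ ≠ 0 := by
    intro h0
    have : dist (h u / exp ζ) 1 ≤ (1 / 2 : NNReal) := hball hu
    norm_num [h0] at this
  refine ⟨u, hu, ?_⟩
  conv_lhs => rw [← hfix.eq]
  rw [exp_add, exp_log hne, mul_div_cancel₀ _ (exp_ne_zero ζ)]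

theorem exists_exp_eq_two_mul_sub_div_add_exp_neg {lam c v w : ℂ} (hv : exp v = 1)
    (hw : 2 * (v - c) / lam = w) (hw1 : 1 ≤ ‖w‖)
    (hbound : 2 * (1 + π + Real.log ‖w‖) / ‖lam‖ + Real.exp 1 / ‖w‖ ≤ ‖w‖ / 4) :
    ∃ u, exp u = 2 * (u - c) / lam + exp (-u) ∧ Real.log ‖w‖ - 1 ≤ u.re := by
  have hw0 : w ≠ 0 := norm_pos_iff.1 (zero_lt_one.trans_le hw1)
  have hv_re : v.re = 0 := by simpa [norm_exp] using congrArg norm hv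
  set ζ := v + log w
  have hζ : exp ζ = w := by rw [exp_add, hv, exp_log hw0, one_mul]
  have hre : ∀ u ∈ closedBall ζ 1, Real.log ‖w‖ - 1 ≤ u.re := fun u hu => by
    have hζ_re : ζ.re = Real.log ‖w‖ := by simp [ζ, hv_re, log_re]
    have hdist := (abs_re_le_norm (u - ζ)).trans (mem_closedBall_iff_norm.1 hu)
    rw [sub_re, abs_le] at hdist
    linarith
  have hexp_le : ∀ u ∈ closedBall ζ 1, (-u).re ≤ 1 - Real.log ‖w‖ := fun u hu => by
    rw [neg_re]; linarith [hre u hu]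
  have hE : Real.exp (1 - Real.log ‖w‖) = Real.exp 1 / ‖w‖ := by
    rw [Real.exp_sub, Real.exp_log (zero_lt_one.trans_le hw1)]
  have happrox : ∀ u ∈ closedBall ζ 1, ‖2 * (u - c) / lam + exp (-u) - exp ζ‖ ≤ ‖exp ζ‖ / 2 := by
    intro u hu
    have hdist : ‖u - v‖ ≤ 1 + π + Real.log ‖w‖ := by
      calc ‖u - v‖ = ‖(u - ζ) + log w‖ := by congr 1; ring
        _ ≤ ‖u - ζ‖ + ‖log w‖ := norm_add_le _ _
        _ ≤ 1 + (Real.log ‖w‖ + π) :=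
          add_le_add (mem_closedBall_iff_norm.1 hu) (norm_log_le_log_norm_add_pi hw1)
        _ = 1 + π + Real.log ‖w‖ := by ring
    have hexp : ‖exp (-u)‖ ≤ Real.exp 1 / ‖w‖ := by
      rw [norm_exp, ← hE]; exact Real.exp_le_exp.2 (hexp_le u hu)
    rw [hζ, ← hw]
    calc ‖2 * (u - c) / lam + exp (-u) - 2 * (v - c) / lam‖
        = ‖2 * (u - v) / lam + exp (-u)‖ := by congr 1; ring
      _ ≤ 2 * ‖u - v‖ / ‖lam‖ + ‖exp (-u)‖ := by
        refine (norm_add_le _ _).trans_eq ?_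
        simp
      _ ≤ 2 * (1 + π + Real.log ‖w‖) / ‖lam‖ + Real.exp 1 / ‖w‖ := by gcongr
      _ ≤ ‖2 * (v - c) / lam‖ / 2 := by rw [hw]; linarith [norm_nonneg w]
  have hlip : ∀ u₁ ∈ closedBall ζ 1, ∀ u₂ ∈ closedBall ζ 1,
      ‖2 * (u₁ - c) / lam + exp (-u₁) - (2 * (u₂ - c) / lam + exp (-u₂))‖ ≤
        ‖exp ζ‖ / 4 * ‖u₁ - u₂‖ := by
    intro u₁ hu₁ u₂ hu₂
    have hexp := norm_exp_sub_exp_le_of_re_le (hexp_le u₁ hu₁) (hexp_le u₂ hu₂)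
    rw [hE, neg_sub_neg, norm_sub_rev u₂] at hexp
    rw [hζ]
    calc ‖2 * (u₁ - c) / lam + exp (-u₁) - (2 * (u₂ - c) / lam + exp (-u₂))‖
        = ‖2 * (u₁ - u₂) / lam + (exp (-u₁) - exp (-u₂))‖ := by congr 1; ring
      _ ≤ 2 / ‖lam‖ * ‖u₁ - u₂‖ + Real.exp 1 / ‖w‖ * ‖u₁ - u₂‖ := by
        refine (norm_add_le _ _).trans (add_le_add (le_of_eq ?_) hexp)
        simp only [norm_div, norm_mul, norm_ofNat]; ring
      _ ≤ ‖w‖ / 4 * ‖u₁ - u₂‖ := by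
        rw [← add_mul]
        gcongr
        refine le_trans ?_ hbound
        gcongr
        linarith [Real.pi_pos, Real.log_nonneg hw1]
  obtain ⟨u, hu, hsol⟩ := exists_exp_eq_of_approx happrox hlip
  exact ⟨u, hsol, hre u hu⟩

theorem mul_sin_add_eq_self_iff {lam : ℂ} (hlam : lam ≠ 0) (a z : ℂ) :
    lam * sin z + a = z ↔ exp (z * I) = 2 * (z * I - a * I) / lam + exp (-(z * I)) := by
  rw [← sub_eq_iff_eq_add, eq_div_iff hlam, sin, neg_mul]
  constructor <;> intro h
  · linear_combination (2 * I) * h + lam * (exp (z * I) - exp (-(z * I))) * I_sq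
  · linear_combination (-I / 2) * h + (a - z) * I_sq

end Complex

theorem infinitely_many_fixed_points (lam a : ℂ) (hlam : lam ≠ 0) :
    {z : ℂ | lam * Complex.sin z + a = z}.Infinite := by
  set w : ℕ → ℂ := fun k => k * (4 * π * I / lam) - 2 * a * I / lam
  have hw : Tendsto (fun k => ‖w k‖) atTop atTop :=
    tendsto_norm_natCast_mul_sub_atTop (div_ne_zero (by simp [Real.pi_ne_zero]) hlam) _
  have hbound : ∀ᶠ M in atTop,
      1 ≤ M ∧ 2 * (1 + π + Real.log M) / ‖lam‖ + Real.exp 1 / M ≤ M / 4 := by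
    filter_upwards [Real.eventually_mul_log_add_le_self (8 / ‖lam‖)
        (8 * (1 + π) / ‖lam‖ + 4 * Real.exp 1), eventually_ge_atTop 1] with M hM hM1
    have he : Real.exp 1 / M ≤ Real.exp 1 := div_le_self (Real.exp_pos 1).le hM1
    have hsplit : 2 * (1 + π + Real.log M) / ‖lam‖ =
        (8 / ‖lam‖ * Real.log M + 8 * (1 + π) / ‖lam‖) / 4 := by ring
    exact ⟨hM1, by linarith⟩
  have hunbounded : ∀ R, ∃ z ∈ {z : ℂ | lam * sin z + a = z}, R ≤ ‖z‖ := by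
    intro R
    obtain ⟨k, ⟨hw1, hwb⟩, hR⟩ := ((hw.eventually hbound).and
      ((Real.tendsto_log_atTop.comp hw).eventually (eventually_ge_atTop (R + 1)))).exists
    obtain ⟨u, hu, hre⟩ := exists_exp_eq_two_mul_sub_div_add_exp_neg (c := a * I)
      (exp_nat_mul_two_pi_mul_I k) (by simp only [w]; ring) hw1 hwb
    refine ⟨-(u * I), (mul_sin_add_eq_self_iff hlam a _).2 ?_, ?_⟩
    · rwa [neg_mul, mul_assoc, I_mul_I, mul_neg_one, neg_neg]
    · have hR' : R ≤ u.re := by simp only [comp_apply] at hR; linarith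
      rw [norm_neg, norm_mul, norm_I, mul_one]
      exact hR'.trans (re_le_norm u)
  intro hfin
  obtain ⟨C, hC⟩ := isBounded_iff_forall_norm_le.1 hfin.isBounded
  obtain ⟨z, hz, hzC⟩ := hunbounded (C + 1)
  linarith [hC z hz]
end

section
/- Let λ, a ∈ ℂ with |a| > 1, |λ| > 1, and let y, v ∈ ℝ with |v| > |y| + |a| and sinh(|y|) > 3|a|. Suppose y' and v' are reals with |y'| ≤ |λ| cosh(|y|) and |v'| ≥ |λ| sinh(|v|) − 2|a|. Then |v'| > |y'| + |a|. -/
/-!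
Since `sinh ‖a‖ > ‖a‖ > 1`, the addition formula gives
`sinh |v| > sinh (|y| + ‖a‖) > sinh |y| + cosh |y|`. Multiplying by `‖lam‖`, the `cosh` term
absorbs `|y'|`, and the `sinh` term, which exceeds `3‖a‖`, pays for the loss `2‖a‖` in `v'`
with `‖a‖` to spare.
-/

open Real

theorem Real.sinh_add_cosh_lt_sinh_add {x y : ℝ} (hx : 0 ≤ x) (hy : 1 < y) :
    sinh x + cosh x < sinh (x + y) := by
  have hsinh_y : 1 < sinh y := hy.trans (self_lt_sinh_iff.mpr (by linarith))
  have hsinh_x : sinh x ≤ sinh x * cosh y :=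
    le_mul_of_one_le_right (sinh_nonneg_iff.mpr hx) (one_le_cosh y)
  have hcosh_x : cosh x < cosh x * sinh y := lt_mul_of_one_lt_right (cosh_pos x) hsinh_y
  rw [sinh_add]
  linarith

theorem inductive_step_large_a (lam a : ℂ) (ha : ‖a‖ > 1)
    (hlam : ‖lam‖ > 1) (y v y' v' : ℝ)
    (hv : |v| > |y| + ‖a‖)
    (hy : Real.sinh |y| > 3 * ‖a‖)
    (hy' : |y'| ≤ ‖lam‖ * Real.cosh |y|)
    (hv' : |v'| ≥ ‖lam‖ * Real.sinh |v| - 2 * ‖a‖) :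
    |v'| > |y'| + ‖a‖ := by
  have hsinh_v : sinh |y| + cosh |y| < sinh |v| :=
    (sinh_add_cosh_lt_sinh_add (abs_nonneg y) ha).trans (sinh_lt_sinh.mpr hv)
  have hsinh_y : sinh |y| ≤ ‖lam‖ * sinh |y| :=
    le_mul_of_one_le_left (by linarith) hlam.le
  calc |y'| + ‖a‖ < ‖lam‖ * (sinh |y| + cosh |y|) - 2 * ‖a‖ := by linarith
    _ < ‖lam‖ * sinh |v| - 2 * ‖a‖ := by gcongr
    _ ≤ |v'| := hv'
end

section
/- Let λ, a ∈ ℂ with 0 < |a| < 1, |λ| > 1, and let y, v ∈ ℝ with |v| > |y| + |a|, cosh(|y|) > 4, and |λ| e^{−|y|} < |a|. Suppose y' and v' are reals with |y'| ≤ |λ| cosh(|y|) and |v'| ≥ |λ| sinh(|v|) − 2|a|. Then |v'| > |y'| + |a|. -/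
/-! Since `sinh (|y| + ‖a‖) ≥ sinh |y| + ‖a‖ cosh |y|` and `cosh |y| - sinh |y| = e^{-|y|}`,
the gap between the lower bound for `|v'|` and the upper bound for `|y'| + ‖a‖` is at least
`‖a‖ (‖λ‖ cosh |y| - 3) - ‖λ‖ e^{-|y|}`, which is positive because `‖λ‖ cosh |y| > 4` and
`‖λ‖ e^{-|y|} < ‖a‖`. -/

open Real

theorem Real.sinh_add_mul_cosh_le_sinh_add {x t : ℝ} (hx : 0 ≤ x) (ht : 0 ≤ t) :
    sinh x + t * cosh x ≤ sinh (x + t) := by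
  have hsinh_x : 0 ≤ sinh x := sinh_nonneg_iff.2 hx
  have hcosh_t : 1 ≤ cosh t := one_le_cosh t
  have hsinh_t : t ≤ sinh t := self_le_sinh_iff.2 ht
  rw [sinh_add]
  nlinarith [cosh_pos x]

theorem inductive_step_small_a_general (lam a : ℂ) (hlam : ‖lam‖ > 1) (y v y' v' : ℝ)
    (hv : |v| > |y| + ‖a‖)
    (hcosh : Real.cosh |y| > 4)
    (hexp : ‖lam‖ * Real.exp (-|y|) < ‖a‖)
    (hy' : |y'| ≤ ‖lam‖ * Real.cosh |y|)
    (hv' : |v'| ≥ ‖lam‖ * Real.sinh |v| - 2 * ‖a‖) :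
    |v'| > |y'| + ‖a‖ := by
  set L := ‖lam‖
  set A := ‖a‖
  have hA : 0 ≤ A := norm_nonneg a
  have hgap : L * cosh |y| + A < L * (sinh |y| + A * cosh |y|) - 2 * A := by
    have hdiff : cosh |y| - sinh |y| = exp (-|y|) := cosh_sub_sinh |y|
    have h4A : 4 * A ≤ L * cosh |y| * A := by
      gcongr
      nlinarith
    nlinarith
  calc |y'| + A ≤ L * cosh |y| + A := by linarith
    _ < L * (sinh |y| + A * cosh |y|) - 2 * A := hgap
    _ ≤ L * sinh (|y| + A) - 2 * A := by
      gcongr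
      exact sinh_add_mul_cosh_le_sinh_add (abs_nonneg y) hA
    _ < L * sinh |v| - 2 * A := by
      gcongr
      exact sinh_lt_sinh.2 hv
    _ ≤ |v'| := hv'

theorem inductive_step_small_a (lam a : ℂ) (ha0 : 0 < ‖a‖)
    (ha : ‖a‖ < 1) (hlam : ‖lam‖ > 1) (y v y' v' : ℝ)
    (hv : |v| > |y| + ‖a‖)
    (hcosh : Real.cosh |y| > 4)
    (hexp : ‖lam‖ * Real.exp (-|y|) < ‖a‖)
    (hy' : |y'| ≤ ‖lam‖ * Real.cosh |y|)
    (hv' : |v'| ≥ ‖lam‖ * Real.sinh |v| - 2 * ‖a‖) :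
    |v'| > |y'| + ‖a‖ :=
  inductive_step_small_a_general lam a hlam y v y' v' hv hcosh hexp hy' hv'
end

section
/- Let λ ∈ ℂ, N ∈ ℕ with N > 3, and c₁ > 10 real, |λ| ≥ 1. If z₀ = x₀ + iy₀ satisfies sinh(|y₀|) > c₁N, and all iterates z_n = f_λ^n(z₀) of f_λ(z) = λ sin(z) remain in the strip {|Re(z)| < N}, then |Im(z_n)| > √(c₁^{2^n} − 1)·N for all n ≥ 1; in particular |z_n| → ∞. -/
/-!
Since `|sin z| ≥ sinh |Im z|`, an orbit point far from the real axis is sent far out. Inside the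
strip `|Re w| < N`, a point with `|w| > cN` has `|Im w| > √(c² - 1) N`, and for `N ≥ 4` the sinh of
that is already at least `c² N`. So the bound `|z_{n+1}| > c^{2^n} N` squares its constant at every
step, which gives both the estimate on `Im z_n` and the escape to infinity.
-/

open Complex Filter

namespace Real

lemma half_add_sq_div_four_le_sinh {x : ℝ} (hx : 0 ≤ x) : x / 2 + x ^ 2 / 4 ≤ sinh x := by
  have hexp := quadratic_le_exp_of_nonneg hx
  have hexp_neg : exp (-x) ≤ 1 := exp_le_one_iff.mpr (by linarith)
  rw [sinh_eq]
  linarith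

lemma sq_mul_le_sinh_sqrt_sq_sub_one_mul {c N : ℝ} (hc : 5 ≤ c ^ 2) (hN : 4 ≤ N) :
    c ^ 2 * N ≤ sinh (√(c ^ 2 - 1) * N) := by
  set s := √(c ^ 2 - 1)
  have hs_sq : s ^ 2 = c ^ 2 - 1 := sq_sqrt (by linarith)
  have hs : 2 ≤ s := le_sqrt_of_sq_le (by linarith)
  have hsN : 2 * N ≤ s * N := by gcongr
  have hN_sq : (c ^ 2 - 1) * N * 4 ≤ (c ^ 2 - 1) * N * N :=
    mul_le_mul_of_nonneg_left hN (mul_nonneg (by linarith) (by linarith))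
  calc c ^ 2 * N ≤ s * N / 2 + (s * N) ^ 2 / 4 := by rw [mul_pow, hs_sq]; linarith
    _ ≤ sinh (s * N) := half_add_sq_div_four_le_sinh (by positivity)

end Real

lemma Complex.sinh_abs_im_le_norm_sin (z : ℂ) : Real.sinh |z.im| ≤ ‖sin z‖ := by
  have hnorm_sq : ‖sin z‖ ^ 2 = Real.sin z.re ^ 2 + Real.sinh z.im ^ 2 := by
    rw [Complex.sq_norm, sin_eq, normSq_apply]
    simp only [← ofReal_sin, ← ofReal_cos, ← ofReal_cosh, ← ofReal_sinh, add_re, add_im, mul_re,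
      mul_im, ofReal_re, ofReal_im, I_re, I_im]
    linear_combination Real.sin z.re ^ 2 * Real.cosh_sq z.im +
      Real.sinh z.im ^ 2 * Real.sin_sq_add_cos_sq z.re
  rw [← Real.abs_sinh]
  exact abs_le_of_sq_le_sq (by nlinarith [sq_nonneg (Real.sin z.re)]) (norm_nonneg _)

lemma Complex.sqrt_sq_sub_one_mul_lt_abs_im {w : ℂ} {c N : ℝ} (hc : 1 ≤ c) (hw : c * N < ‖w‖)
    (hre : |w.re| < N) : √(c ^ 2 - 1) * N < |w.im| := by
  have hN : 0 < N := (abs_nonneg _).trans_lt hre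
  have hre_sq : w.re ^ 2 < N ^ 2 := by rw [← sq_abs]; gcongr
  have hw_sq : (c * N) ^ 2 < w.re ^ 2 + w.im ^ 2 := by
    rw [show w.re ^ 2 + w.im ^ 2 = ‖w‖ ^ 2 by rw [Complex.sq_norm, normSq_apply]; ring]
    gcongr
  calc √(c ^ 2 - 1) * N = √((c ^ 2 - 1) * N ^ 2) := by
        rw [Real.sqrt_mul' _ (sq_nonneg N), Real.sqrt_sq hN.le]
    _ < √(w.im ^ 2) := Real.sqrt_lt_sqrt (mul_nonneg (by nlinarith) (sq_nonneg N)) (by nlinarith)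
    _ = |w.im| := Real.sqrt_sq_eq_abs _

section Escape

variable {f : ℂ → ℂ} (hf : ∀ z, Real.sinh |z.im| ≤ ‖f z‖) {c N : ℝ}
include hf

lemma sq_mul_lt_norm_of_mul_lt_norm (hc : 3 ≤ c) (hN : 4 ≤ N) {w : ℂ} (hw : c * N < ‖w‖)
    (hre : |w.re| < N) : c ^ 2 * N < ‖f w‖ :=
  calc c ^ 2 * N ≤ Real.sinh (√(c ^ 2 - 1) * N) :=
        Real.sq_mul_le_sinh_sqrt_sq_sub_one_mul (by nlinarith) hN
    _ < Real.sinh |w.im| :=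
        Real.sinh_lt_sinh.mpr (sqrt_sq_sub_one_mul_lt_abs_im (by linarith) hw hre)
    _ ≤ ‖f w‖ := hf w

lemma pow_two_pow_mul_lt_norm_iterate_succ (hc : 3 ≤ c) (hN : 4 ≤ N) {z₀ : ℂ}
    (h0 : c * N < Real.sinh |z₀.im|) (hstrip : ∀ n, |(f^[n] z₀).re| < N) (n : ℕ) :
    c ^ 2 ^ n * N < ‖f^[n + 1] z₀‖ := by
  induction n with
  | zero => simpa using h0.trans_le (hf z₀)
  | succ n ih =>
    have hc_pow : 3 ≤ c ^ 2 ^ n := hc.trans (le_self_pow₀ (by linarith) (by positivity))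
    rw [pow_succ, pow_mul, Function.iterate_succ_apply']
    exact sq_mul_lt_norm_of_mul_lt_norm hf hc_pow hN ih (hstrip (n + 1))

end Escape

theorem escape_estimate (lam : ℂ) (hlam : ‖lam‖ ≥ 1) (N : ℕ) (hN : N > 3)
    (c₁ : ℝ) (hc : c₁ > 10) (z₀ : ℂ)
    (h0 : Real.sinh |z₀.im| > c₁ * N)
    (hstrip : ∀ n : ℕ, |((fun z => lam * Complex.sin z)^[n] z₀).re| < N) :
    (∀ n : ℕ, n ≥ 1 →
      |((fun z => lam * Complex.sin z)^[n] z₀).im| > Real.sqrt (c₁ ^ (2 ^ n) - 1) * N) ∧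
    Filter.Tendsto (fun n : ℕ => ‖(fun z => lam * Complex.sin z)^[n] z₀‖)
      Filter.atTop Filter.atTop := by
  have hf (z : ℂ) : Real.sinh |z.im| ≤ ‖lam * sin z‖ := by
    rw [norm_mul]
    exact (sinh_abs_im_le_norm_sin z).trans (le_mul_of_one_le_left (norm_nonneg _) hlam)
  have hN' : (4 : ℝ) ≤ N := by exact_mod_cast hN
  have hnorm := pow_two_pow_mul_lt_norm_iterate_succ hf (by linarith) hN' h0 hstrip
  refine ⟨fun n hn => ?_, ?_⟩
  · obtain ⟨m, rfl⟩ := Nat.exists_eq_add_of_le' hn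
    have hc_pow : 1 ≤ c₁ ^ 2 ^ m := one_le_pow₀ (by linarith)
    simpa [pow_succ, pow_mul] using
      sqrt_sq_sub_one_mul_lt_abs_im hc_pow (hnorm m) (hstrip (m + 1))
  · have hbound : Tendsto (fun n : ℕ => c₁ ^ 2 ^ n * N) atTop atTop :=
      ((tendsto_pow_atTop_atTop_of_one_lt (by linarith)).comp
        (tendsto_pow_atTop_atTop_of_one_lt one_lt_two)).atTop_mul_const (by linarith)
    exact (tendsto_add_atTop_iff_nat 1).mp (tendsto_atTop_mono (fun n => (hnorm n).le) hbound)
end
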